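/- arXiv:2509.19317 — 2 statements merged into one kernel-verified Lean document; each statement's English description precedes it below -/
import Mathlib

section
/- Let b > 1, x* = 1/(b-1), and x₀ > x*. For every function y₀ : ℝ → ℝ there exists a function y : ℝ → ℝ such that y(x+1) = y(bx) for all x > x* and y(x) = y₀(x) for all x in the interval [x₀ + 1, b·x₀); moreover, any two functions satisfying these two conditions agree at every point of the open interval (b/(b-1), ∞). -/
/-!
The translation `x = b / (b - 1) + t` turns `y (x + 1) = y (b * x)` for `x > 1 / (b - 1)`
into invariance of `t ↦ y (b / (b - 1) + t)` under `t ↦ b * t` for `t > 0`, and the initial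
interval `[x₀ + 1, b * x₀)` into `[c, b * c)` with `c = x₀ - 1 / (b - 1) > 0`. In logarithmic
coordinates such an invariant function is periodic with period `log b`, so it is determined by
its values on the fundamental domain `[c, b * c)`, which can be prescribed arbitrarily.
-/

open Real Set

/-- The representative of `t > 0` in `[c, b * c)` modulo multiplication by powers of `b`. -/
noncomputable def foldIco {b : ℝ} (hb : 1 < b) (c t : ℝ) : ℝ :=
  exp (toIcoMod (log_pos hb) (log c) (log t))

section foldIco

variable {b : ℝ} (hb : 1 < b) {c t : ℝ}

theorem foldIco_mem (hc : 0 < c) (t : ℝ) : foldIco hb c t ∈ Ico c (b * c) := by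
  unfold foldIco
  obtain ⟨hlo, hhi⟩ := toIcoMod_mem_Ico (log_pos hb) (log c) (log t)
  rw [add_comm, ← log_mul (by positivity) hc.ne'] at hhi
  constructor
  · simpa [exp_log hc] using exp_le_exp.2 hlo
  · simpa [exp_log (mul_pos (by linarith : 0 < b) hc)] using exp_lt_exp.2 hhi

theorem foldIco_of_mem (h : t ∈ Ico c (b * c)) : foldIco hb c t = t := by
  obtain ⟨hlo, hhi⟩ := h
  have hc : 0 < c := by nlinarith
  have ht : 0 < t := hc.trans_le hlo
  have hlog : log t ∈ Ico (log c) (log c + log b) := by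
    rw [← log_mul hc.ne' (by positivity), mul_comm]
    exact ⟨log_le_log hc hlo, log_lt_log ht hhi⟩
  rw [foldIco, (toIcoMod_eq_self _).2 hlog, exp_log ht]

theorem foldIco_mul (ht : 0 < t) : foldIco hb c (b * t) = foldIco hb c t := by
  rw [foldIco, foldIco, log_mul (by positivity) ht.ne', add_comm, toIcoMod_add_right]

theorem apply_foldIco {α : Type*} {w : ℝ → α} (hw : ∀ t > 0, w (b * t) = w t) (ht : 0 < t) :
    w (foldIco hb c t) = w t := by
  have hper : Function.Periodic (w ∘ exp) (log b) := fun s => by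
    simp only [Function.comp, exp_add, exp_log (by positivity : 0 < b), mul_comm _ b,
      hw _ (exp_pos s)]
  have hmod : toIcoMod (log_pos hb) (log c) (log t) =
      log t - toIcoDiv (log_pos hb) (log c) (log t) • log b := by
    rw [← self_sub_toIcoMod, sub_sub_cancel]
  change (w ∘ exp) _ = _
  rw [hmod, hper.sub_zsmul_eq, Function.comp, exp_log ht]

end foldIco

theorem exists_mul_invariant_extension {α : Type*} {b : ℝ} (hb : 1 < b) (c : ℝ)
    (v : ℝ → α) :
    ∃ w : ℝ → α, (∀ t > 0, w (b * t) = w t) ∧ ∀ t ∈ Ico c (b * c), w t = v t :=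
  ⟨fun t => v (foldIco hb c t), fun _ ht => congrArg v (foldIco_mul hb ht),
    fun _ ht => congrArg v (foldIco_of_mem hb ht)⟩

theorem eqOn_Ioi_of_mul_invariant {α : Type*} {b c : ℝ} (hb : 1 < b) (hc : 0 < c)
    {w w' : ℝ → α} (hw : ∀ t > 0, w (b * t) = w t) (hw' : ∀ t > 0, w' (b * t) = w' t)
    (h : EqOn w w' (Ico c (b * c))) : EqOn w w' (Ioi 0) := fun t ht => by
  rw [← apply_foldIco hb (c := c) hw ht, ← apply_foldIco hb (c := c) hw' ht]
  exact h (foldIco_mem hb hc t)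

/-- `b / (b - 1)` is the fixed point of `x ↦ b * (x - 1)`. -/
theorem funeq_iff_mul_invariant {α : Type*} {b : ℝ} (hb : 1 < b) (y : ℝ → α) :
    (∀ x : ℝ, x > 1 / (b - 1) → y (x + 1) = y (b * x)) ↔
      ∀ t > 0, y (b / (b - 1) + b * t) = y (b / (b - 1) + t) := by
  have hb1 : b - 1 ≠ 0 := by linarith
  have hshift : b / (b - 1) = 1 / (b - 1) + 1 := by field_simp; ring
  constructor
  · intro h t ht
    have e : b * (1 / (b - 1) + t) = b / (b - 1) + b * t := by field_simp
    rw [← e, ← h _ (by linarith), hshift]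
    ring_nf
  · intro h x hx
    have e : b * x = b / (b - 1) + b * (x - 1 / (b - 1)) := by field_simp; ring
    rw [e, h _ (by linarith), hshift]
    congr 1
    ring

/-- For `b > 1`, `x* = 1/(b-1)`, `x₀ > x*`: for any initial function `y₀`,
there is a solution `y` of `y(x+1) = y(bx)` (for `x > x*`) agreeing with `y₀` on
`[x₀ + 1, b x₀)`, and any two such solutions agree on `(b/(b-1), ∞)`. -/
theorem stmt_5 (b x₀ : ℝ) (hb : b > 1) (hx₀ : x₀ > 1 / (b - 1)) :
    ∀ y₀ : ℝ → ℝ,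
      (∃ y : ℝ → ℝ,
        (∀ x : ℝ, x > 1 / (b - 1) → y (x + 1) = y (b * x)) ∧
        (∀ x ∈ Set.Ico (x₀ + 1) (b * x₀), y x = y₀ x)) ∧
      (∀ y z : ℝ → ℝ,
        ((∀ x : ℝ, x > 1 / (b - 1) → y (x + 1) = y (b * x)) ∧
          (∀ x ∈ Set.Ico (x₀ + 1) (b * x₀), y x = y₀ x)) →
        ((∀ x : ℝ, x > 1 / (b - 1) → z (x + 1) = z (b * x)) ∧
          (∀ x ∈ Set.Ico (x₀ + 1) (b * x₀), z x = y₀ x)) →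
        ∀ x ∈ Set.Ioi (b / (b - 1)), y x = z x) := by
  intro y₀
  set p := b / (b - 1) with hp
  set c := x₀ + 1 - p with hc_def
  have hb1 : b - 1 ≠ 0 := by linarith
  have hc : 0 < c := by
    rw [hc_def, hp, show b / (b - 1) = 1 / (b - 1) + 1 by field_simp; ring]
    linarith
  have hbc : b * c = b * x₀ - p := by
    rw [hc_def, hp]
    field_simp
    ring
  have hIco : ∀ t, p + t ∈ Ico (x₀ + 1) (b * x₀) ↔ t ∈ Ico c (b * c) := fun t => by
    simp only [mem_Ico, hbc]
    constructor <;> rintro ⟨h₁, h₂⟩ <;> constructor <;> linarith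
  constructor
  · obtain ⟨w, hw, hwv⟩ := exists_mul_invariant_extension hb c (fun t => y₀ (p + t))
    refine ⟨fun x => w (x - p),
      (funeq_iff_mul_invariant hb (fun x => w (x - p))).2 fun t ht => ?_, fun x hx => ?_⟩
    · change w (p + b * t - p) = w (p + t - p)
      simpa only [add_sub_cancel_left] using hw t ht
    · rw [← add_sub_cancel p x] at hx
      simpa only [add_sub_cancel] using hwv _ ((hIco _).1 hx)
  · rintro y z ⟨hy, hy₀⟩ ⟨hz, hz₀⟩ x (hx : p < x)
    have hagree : EqOn (fun t => y (p + t)) (fun t => z (p + t)) (Ico c (b * c)) :=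
      fun t ht => show y (p + t) = z (p + t) by
        rw [hy₀ _ ((hIco t).2 ht), hz₀ _ ((hIco t).2 ht)]
    have := eqOn_Ioi_of_mul_invariant hb hc ((funeq_iff_mul_invariant hb y).1 hy)
      ((funeq_iff_mul_invariant hb z).1 hz) hagree (sub_pos.2 hx)
    simpa only [add_sub_cancel] using this
end

section
/- Let b < -1, x* = 1/(b-1), c = b/(b-1), and let ε > 0. Set I₀ = (c - |b|ε, c - ε] ∪ [c + ε, c + |b|ε). For every function y₀ : ℝ → ℝ there exists a function y : ℝ → ℝ such that y(x+1) = y(bx) for all x ≠ x* and y(x) = y₀(x) for all x ∈ I₀; moreover, any two functions satisfying these two conditions agree at every point of ℝ \ {c}. -/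
/-!
Put `x = xs + s`. Since `xs + 1 = b * xs = c`, the equation says exactly that `s ↦ y (c + s)` is
invariant under `s ↦ b * s` on `s ≠ 0`. As `|b| > 1`, the annulus `ε ≤ |s| < |b| ε`, which is
`I₀ - c`, is a fundamental domain of the group `b ^ ℤ` acting on `ℝ \ {0}`: every `s ≠ 0` is
`b ^ n * s'` for exactly one `n` and one `s'` in the annulus, with `n = ⌊log_{|b|} (|s| / ε)⌋`.
So a solution is any function of the annulus representative, and it is determined off `c` by its
values on `I₀`.
-/

open Set

noncomputable section

def annulusIndex (r ε t : ℝ) : ℤ := ⌊Real.logb |r| (|t| / ε)⌋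

def annulusRep (r ε t : ℝ) : ℝ := r ^ (-annulusIndex r ε t) * t

end

section Annulus

variable {r ε t : ℝ}

theorem annulusIndex_eq_iff (hr : 1 < |r|) (hε : 0 < ε) (ht : t ≠ 0) (k : ℤ) :
    annulusIndex r ε t = k ↔ |r| ^ k * ε ≤ |t| ∧ |t| < |r| ^ (k + 1) * ε := by
  have hq : 0 < |t| / ε := div_pos (abs_pos.mpr ht) hε
  rw [annulusIndex, Int.floor_eq_iff, Real.le_logb_iff_rpow_le hr hq,
    Real.logb_lt_iff_lt_rpow hr hq, ← le_div_iff₀ hε, ← div_lt_iff₀ hε]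
  exact_mod_cast Iff.rfl

theorem annulusIndex_mul_self (hr : 1 < |r|) (hε : 0 < ε) (ht : t ≠ 0) :
    annulusIndex r ε (r * t) = annulusIndex r ε t + 1 := by
  have hr0 : |r| ≠ 0 := by positivity
  rw [annulusIndex, abs_mul, mul_div_assoc, Real.logb_mul hr0 (by positivity),
    Real.logb_self_eq_one hr, add_comm, Int.floor_add_one, annulusIndex]

theorem annulusIndex_eq_zero (hr : 1 < |r|) (hε : 0 < ε) (h₁ : ε ≤ |t|) (h₂ : |t| < |r| * ε) :
    annulusIndex r ε t = 0 := by
  have ht : t ≠ 0 := abs_pos.mp (hε.trans_le h₁)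
  rw [annulusIndex_eq_iff hr hε ht]
  simpa using ⟨h₁, h₂⟩

theorem annulusRep_mul_self (hr : 1 < |r|) (hε : 0 < ε) (ht : t ≠ 0) :
    annulusRep r ε (r * t) = annulusRep r ε t := by
  have hr0 : r ≠ 0 := abs_pos.mp (one_pos.trans hr)
  rw [annulusRep, annulusRep, annulusIndex_mul_self hr hε ht, neg_add, zpow_add₀ hr0,
    zpow_neg_one]
  field_simp

theorem annulusRep_of_mem (hr : 1 < |r|) (hε : 0 < ε) (h₁ : ε ≤ |t|) (h₂ : |t| < |r| * ε) :
    annulusRep r ε t = t := by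
  simp [annulusRep, annulusIndex_eq_zero hr hε h₁ h₂]

theorem annulusRep_mem (hr : 1 < |r|) (hε : 0 < ε) (ht : t ≠ 0) :
    ε ≤ |annulusRep r ε t| ∧ |annulusRep r ε t| < |r| * ε := by
  obtain ⟨h₁, h₂⟩ := (annulusIndex_eq_iff hr hε ht _).mp rfl
  have hpos : 0 < |r| ^ annulusIndex r ε t := zpow_pos (one_pos.trans hr) _
  rw [annulusRep, abs_mul, abs_zpow, zpow_neg, ← div_eq_inv_mul, le_div_iff₀ hpos,
    div_lt_iff₀ hpos]
  rw [zpow_add_one₀ (one_pos.trans hr).ne'] at h₂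
  constructor <;> linarith

theorem zpow_annulusIndex_mul_annulusRep (hr : r ≠ 0) :
    r ^ annulusIndex r ε t * annulusRep r ε t = t := by
  rw [annulusRep, zpow_neg, ← mul_assoc, mul_inv_cancel₀ (zpow_ne_zero _ hr), one_mul]

end Annulus

theorem apply_zpow_mul_eq_of_apply_mul_eq {r : ℝ} {u : ℝ → ℝ} (hr : r ≠ 0)
    (hu : ∀ s, s ≠ 0 → u (r * s) = u s) (n : ℤ) {s : ℝ} (hs : s ≠ 0) :
    u (r ^ n * s) = u s := by
  induction n using Int.induction_on with
  | zero => simp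
  | succ k ih =>
    rw [zpow_add_one₀ hr, mul_comm _ r, mul_assoc, hu _ (by positivity), ih]
  | pred k ih =>
    rw [← ih, ← hu _ (by positivity), ← mul_assoc, ← zpow_one_add₀ hr]
    ring_nf

theorem apply_eq_apply_annulusRep {r ε t : ℝ} {u : ℝ → ℝ} (hr0 : r ≠ 0)
    (hu : ∀ s, s ≠ 0 → u (r * s) = u s) (ht : t ≠ 0) :
    u t = u (annulusRep r ε t) := by
  conv_lhs => rw [← zpow_annulusIndex_mul_annulusRep (ε := ε) (t := t) hr0]
  exact apply_zpow_mul_eq_of_apply_mul_eq hr0 hu _ (mul_ne_zero (zpow_ne_zero _ hr0) ht)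

theorem funeq_iff_apply_add_mul_eq {b xs c : ℝ} {y : ℝ → ℝ} (h₁ : xs + 1 = c) (h₂ : b * xs = c) :
    (∀ x, x ≠ xs → y (x + 1) = y (b * x)) ↔ ∀ s, s ≠ 0 → y (c + b * s) = y (c + s) := by
  have hx : ∀ s, xs + s + 1 = c + s ∧ b * (xs + s) = c + b * s := fun s =>
    ⟨by rw [← h₁]; ring, by rw [mul_add, h₂]⟩
  constructor
  · intro hy s hs
    rw [← (hx s).1, ← (hx s).2, hy _ (by simpa using hs)]
  · intro hy x hx'
    obtain ⟨s, rfl⟩ : ∃ s, x = xs + s := ⟨x - xs, by ring⟩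
    rw [(hx s).1, (hx s).2, hy _ (by simpa using hx')]

theorem mem_Ioc_union_Ico_iff {a c ε x : ℝ} (hε : 0 < ε) :
    x ∈ Ioc (c - a * ε) (c - ε) ∪ Ico (c + ε) (c + a * ε) ↔
      ε ≤ |x - c| ∧ |x - c| < a * ε := by
  simp only [mem_union, mem_Ioc, mem_Ico]
  rcases le_or_gt c x with h | h
  · rw [abs_of_nonneg (sub_nonneg.mpr h)]
    constructor
    · rintro (h' | h') <;> constructor <;> linarith
    · rintro ⟨h₁, h₂⟩; right; constructor <;> linarith
  · rw [abs_of_neg (sub_neg.mpr h)]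
    constructor
    · rintro (h' | h') <;> constructor <;> linarith
    · rintro ⟨h₁, h₂⟩; left; constructor <;> linarith

/-- For `b < -1`, `x* = 1/(b-1)`, `c = b/(b-1)`, `ε > 0`, and
`I₀ = (c - |b|ε, c - ε] ∪ [c + ε, c + |b|ε)`: for any initial function `y₀` there is a
solution `y` of `y(x+1) = y(bx)` (for all `x ≠ x*`) agreeing with `y₀` on `I₀`, and any
two such solutions agree on `ℝ \ {c}`. -/
theorem stmt_7 (b ε : ℝ) (hb : b < -1) (hε : 0 < ε)
    (xs c : ℝ) (hxs : xs = 1 / (b - 1)) (hc : c = b / (b - 1))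
    (I₀ : Set ℝ)
    (hI₀ : I₀ = Set.Ioc (c - |b| * ε) (c - ε) ∪ Set.Ico (c + ε) (c + |b| * ε)) :
    ∀ y₀ : ℝ → ℝ,
      (∃ y : ℝ → ℝ,
        (∀ x : ℝ, x ≠ xs → y (x + 1) = y (b * x)) ∧
        (∀ x ∈ I₀, y x = y₀ x)) ∧
      (∀ y z : ℝ → ℝ,
        ((∀ x : ℝ, x ≠ xs → y (x + 1) = y (b * x)) ∧ (∀ x ∈ I₀, y x = y₀ x)) →
        ((∀ x : ℝ, x ≠ xs → z (x + 1) = z (b * x)) ∧ (∀ x ∈ I₀, z x = y₀ x)) →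
        ∀ x : ℝ, x ≠ c → y x = z x) := by
  have hb1 : b - 1 ≠ 0 := by linarith
  have hr : 1 < |b| := by rw [abs_of_neg (by linarith)]; linarith
  have h₁ : xs + 1 = c := by rw [hxs, hc]; field_simp; ring
  have h₂ : b * xs = c := by rw [hxs, hc]; field_simp
  have hI : ∀ x, x ∈ I₀ ↔ ε ≤ |x - c| ∧ |x - c| < |b| * ε := fun x => by
    rw [hI₀, mem_Ioc_union_Ico_iff hε]
  simp only [funeq_iff_apply_add_mul_eq h₁ h₂]
  have h_rep : ∀ y : ℝ → ℝ, (∀ s, s ≠ 0 → y (c + b * s) = y (c + s)) →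
      ∀ x, x ≠ c → y x = y (c + annulusRep b ε (x - c)) := fun y hy x hx => by
    simpa using apply_eq_apply_annulusRep (u := fun s => y (c + s)) (by linarith) hy
      (sub_ne_zero.mpr hx)
  intro y₀
  refine ⟨⟨fun x => y₀ (c + annulusRep b ε (x - c)), fun s hs => ?_, fun x hx => ?_⟩, ?_⟩
  · simp only [add_sub_cancel_left, annulusRep_mul_self hr hε hs]
  · obtain ⟨hx₁, hx₂⟩ := (hI x).mp hx
    simp only [annulusRep_of_mem hr hε hx₁ hx₂, add_sub_cancel]
  · rintro y z ⟨hy, hy₀⟩ ⟨hz, hz₀⟩ x hx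
    have hmem : c + annulusRep b ε (x - c) ∈ I₀ := by
      rw [hI, add_sub_cancel_left]
      exact annulusRep_mem hr hε (sub_ne_zero.mpr hx)
    rw [h_rep y hy x hx, h_rep z hz x hx, hy₀ _ hmem, hz₀ _ hmem]
end
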